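/- For all a, b > 0 with a ≠ b, the Neuman–Sándor mean satisfies M(a,b) < C(a,b)^β · A(a,b)^(1-β), where β = -log(log(1+√2))/log 2. -/

import Mathlib

noncomputable def NSmean (a b : ℝ) : ℝ := (a - b) / (2 * Real.arsinh ((a - b) / (a + b)))
noncomputable def Amean (a b : ℝ) : ℝ := (a + b) / 2
noncomputable def Cmean (a b : ℝ) : ℝ := (a ^ 2 + b ^ 2) / (a + b)

/-!
Put `T = (a - b) / (a + b)` and `x = arsinh T`, so that `0 < x < arsinh 1` when `b < a`. Then
`M = A · sinh x / x` and `C = A · (1 + T²) = A · cosh² x`, and the claim becomes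
`sinh x / x < cosh x ^ (2β)`, i.e. positivity of `gap β x = 2β log cosh x - log sinh x + log x`.
The exponent `β` is exactly the one for which `gap β (arsinh 1) = 0`; numerically `2/11 ≤ β ≤ 5/27`.
On `(0, 2/5]` positivity follows from Taylor bounds on `sinh`, `cosh` together with
`log t ≤ t - 1` and `1 - 1/t ≤ log t`. On `[2/5, ∞)` the function `gap β` is concave, so on
`[2/5, arsinh 1)` it stays above the chord joining its positive value at `2/5` to its zero at
`arsinh 1`.
-/

open Real Set
open scoped Nat

namespace Real

lemma sum_le_cosh (x : ℝ) (n : ℕ) :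
    ∑ k ∈ Finset.range n, x ^ (2 * k) / (2 * k)! ≤ cosh x :=
  sum_le_hasSum _ (fun k _ => div_nonneg ((even_two_mul k).pow_nonneg x) (by positivity))
    (hasSum_cosh x)

lemma sum_le_sinh {x : ℝ} (hx : 0 ≤ x) (n : ℕ) :
    ∑ k ∈ Finset.range n, x ^ (2 * k + 1) / (2 * k + 1)! ≤ sinh x :=
  sum_le_hasSum _ (fun k _ => by positivity) (hasSum_sinh x)

lemma one_add_sq_div_two_add_le_cosh (x : ℝ) : 1 + x ^ 2 / 2 + x ^ 4 / 24 ≤ cosh x := by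
  have h := sum_le_cosh x 3
  norm_num [Finset.sum_range_succ, Nat.factorial] at h
  linarith

lemma add_pow_three_div_six_add_le_sinh {x : ℝ} (hx : 0 ≤ x) :
    x + x ^ 3 / 6 + x ^ 5 / 120 ≤ sinh x := by
  have h := sum_le_sinh hx 3
  norm_num [Finset.sum_range_succ, Nat.factorial] at h
  linarith

lemma sinh_le_of_le_one {x : ℝ} (hx0 : 0 ≤ x) (hx1 : x ≤ 1) :
    sinh x ≤ x + x ^ 3 / 6 + x ^ 5 / 100 := by
  have hpos := exp_bound (x := x) (by rwa [abs_of_nonneg hx0]) (n := 5) (by norm_num)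
  have hneg := exp_bound (x := -x) (by rwa [abs_neg, abs_of_nonneg hx0]) (n := 5) (by norm_num)
  simp only [Finset.sum_range_succ, Finset.sum_range_zero, abs_neg, abs_of_nonneg hx0,
    Nat.factorial] at hpos hneg
  norm_num at hpos hneg
  rw [sinh_eq]
  linarith [(abs_le.1 hpos).2, (abs_le.1 hneg).1]

lemma arsinh_one_eq_log : arsinh 1 = log (1 + √2) := by
  norm_num [arsinh]

lemma arsinh_one_mem_Icc : arsinh 1 ∈ Icc (0.88 : ℝ) 0.8815 := by
  constructor
  · rw [← arsinh_sinh 0.88, arsinh_le_arsinh]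
    have h := sinh_le_of_le_one (x := 0.88) (by norm_num) (by norm_num)
    norm_num at h
    linarith
  · rw [← arsinh_sinh 0.8815, arsinh_le_arsinh]
    have h := add_pow_three_div_six_add_le_sinh (x := 0.8815) (by norm_num)
    norm_num at h
    linarith

end Real

namespace NeumanSandor

lemma exponent_mem_Icc {β : ℝ} (hβ : β * log 2 + log (arsinh 1) = 0) :
    β ∈ Icc (2 / 11) (5 / 27) := by
  obtain ⟨hc₁, hc₂⟩ := arsinh_one_mem_Icc
  have hc : 0 < arsinh 1 := by linarith
  have hlog2 : 0 < log 2 := log_pos one_lt_two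
  have hupper : arsinh 1 ^ 11 * 2 ^ 2 ≤ 1 := by
    have := pow_le_pow_left₀ hc.le hc₂ 11
    nlinarith
  have hlower : 1 ≤ arsinh 1 ^ 27 * 2 ^ 5 := by
    have := pow_le_pow_left₀ (by norm_num) hc₁ 27
    nlinarith
  have hlog_upper := log_le_log (by positivity) hupper
  have hlog_lower := log_le_log one_pos hlower
  rw [log_mul (by positivity) (by norm_num), log_pow, log_pow] at hlog_upper hlog_lower
  rw [log_one] at hlog_upper hlog_lower
  push_cast at hlog_upper hlog_lower
  constructor
  · exact le_of_mul_le_mul_right (by linarith) hlog2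
  · exact le_of_mul_le_mul_right (by linarith) hlog2

noncomputable def gap (β x : ℝ) : ℝ := 2 * β * log (cosh x) - log (sinh x) + log x

noncomputable def gapDeriv (β x : ℝ) : ℝ := 2 * β * (sinh x / cosh x) - cosh x / sinh x + x⁻¹

noncomputable def gapDeriv2 (β x : ℝ) : ℝ := 2 * β / cosh x ^ 2 + 1 / sinh x ^ 2 - 1 / x ^ 2

lemma gap_arsinh_one {β : ℝ} (hβ : β * log 2 + log (arsinh 1) = 0) : gap β (arsinh 1) = 0 := by
  rw [gap, cosh_arsinh, sinh_arsinh, log_one, one_pow, one_add_one_eq_two,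
    log_sqrt zero_le_two]
  linarith

lemma sinh_div_self_sub_one_lt {β x : ℝ} (hβ : 2 / 11 ≤ β) (hx0 : 0 < x) (hx : x ≤ 2 / 5) :
    sinh x / x - 1 < 2 * β * (1 - (cosh x)⁻¹) := by
  have hs := sinh_le_of_le_one hx0.le (by linarith)
  have hc := one_add_sq_div_two_add_le_cosh x
  have hc0 := cosh_pos x
  have hy0 : 0 < x ^ 2 := by positivity
  have hy1 : x ^ 2 ≤ 4 / 25 := by nlinarith
  have hP : 0 < 2 * β * (1 / 2 + x ^ 2 / 24) -
      (1 / 6 + x ^ 2 / 100) * (1 + x ^ 2 / 2 + (x ^ 2) ^ 2 / 24) := by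
    nlinarith [mul_nonneg hy0.le hy0.le]
  have he : 0 < 2 * β - x ^ 2 / 6 - x ^ 4 / 100 := by nlinarith
  have hmargin : x * (2 * β - x ^ 2 / 6 - x ^ 4 / 100) ≤ 2 * β * x - (sinh x - x) := by
    linarith
  -- `(sinh x - x) cosh x < 2βx (cosh x - 1)` is hardest for the smallest `cosh x`
  have hcosh := mul_le_mul hc hmargin (mul_pos hx0 he).le hc0.le
  have key : (sinh x - x) * cosh x < 2 * β * (cosh x - 1) * x := by
    nlinarith [mul_pos (mul_pos hx0 hy0) hP]
  rw [div_sub_one hx0.ne', show 1 - (cosh x)⁻¹ = (cosh x - 1) / cosh x by field_simp,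
    ← mul_div_assoc, div_lt_div_iff₀ hx0 hc0]
  exact key

lemma gap_pos_of_le_two_fifths {β x : ℝ} (hβ : 2 / 11 ≤ β) (hx0 : 0 < x) (hx : x ≤ 2 / 5) :
    0 < gap β x := by
  have hs : 0 < sinh x := sinh_pos_iff.2 hx0
  have hlog_sinh : log (sinh x) - log x ≤ sinh x / x - 1 := by
    rw [← log_div hs.ne' hx0.ne']
    exact log_le_sub_one_of_pos (div_pos hs hx0)
  have hlog_cosh := one_sub_inv_le_log_of_pos (cosh_pos x)
  have := sinh_div_self_sub_one_lt hβ hx0 hx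
  unfold gap
  nlinarith

lemma hasDerivAt_gap (β : ℝ) {x : ℝ} (hx : 0 < x) : HasDerivAt (gap β) (gapDeriv β x) x := by
  have hs : sinh x ≠ 0 := (sinh_pos_iff.2 hx).ne'
  exact (((hasDerivAt_cosh x).log (cosh_pos x).ne').const_mul (2 * β)).sub
    ((hasDerivAt_sinh x).log hs) |>.add (hasDerivAt_log hx.ne')

lemma hasDerivAt_gapDeriv (β : ℝ) {x : ℝ} (hx : 0 < x) :
    HasDerivAt (gapDeriv β) (gapDeriv2 β x) x := by
  have hs : sinh x ≠ 0 := (sinh_pos_iff.2 hx).ne'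
  have hc : cosh x ≠ 0 := (cosh_pos x).ne'
  have := ((((hasDerivAt_sinh x).div (hasDerivAt_cosh x) hc).const_mul (2 * β)).sub
    ((hasDerivAt_cosh x).div (hasDerivAt_sinh x) hs)).add (hasDerivAt_inv hx.ne')
  refine this.congr_deriv ?_
  rw [show cosh x * cosh x - sinh x * sinh x = 1 by linear_combination cosh_sq x,
    show sinh x * sinh x - cosh x * cosh x = -1 by linear_combination -cosh_sq x, gapDeriv2]
  ring

lemma gapDeriv2_nonpos {β x : ℝ} (hβ : β ≤ 5 / 27) (hx : 2 / 5 ≤ x) : gapDeriv2 β x ≤ 0 := by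
  have hx0 : 0 < x := by linarith
  have hS0 : 0 < sinh x := sinh_pos_iff.2 hx0
  set s₀ := x + x ^ 3 / 6 with hs₀
  have hs₀S : s₀ ≤ sinh x := by
    linarith [add_pow_three_div_six_add_le_sinh hx0.le, pow_pos hx0 5]
  have hxs₀ : x ≤ s₀ := by linarith [pow_pos hx0 3]
  have hy : 4 / 25 ≤ x ^ 2 := by nlinarith
  have hpoly : 10 / 27 * (1 + x ^ 2 / 6) ^ 2 ≤
      (1 + x ^ 2 * (1 + x ^ 2 / 6) ^ 2) * (1 / 3 + x ^ 2 / 36) := by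
    nlinarith [mul_nonneg (sub_nonneg.2 hy) (sub_nonneg.2 hy), pow_nonneg (sub_nonneg.2 hy) 3]
  have hbase : 2 * β * s₀ ^ 2 * x ^ 2 ≤ (1 + s₀ ^ 2) * (s₀ ^ 2 - x ^ 2) := by
    rw [show s₀ ^ 2 - x ^ 2 = (x ^ 2) ^ 2 * (1 / 3 + x ^ 2 / 36) by ring,
      show s₀ ^ 2 = x ^ 2 * (1 + x ^ 2 / 6) ^ 2 by ring]
    nlinarith [mul_le_mul_of_nonneg_left hpoly (pow_nonneg (sq_nonneg x) 2),
      mul_le_mul_of_nonneg_right hβ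
        (by positivity : (0 : ℝ) ≤ (x ^ 2) ^ 2 * (1 + x ^ 2 / 6) ^ 2)]
  -- `(1 + s²)(s² - x²) - 2βs²x²` is increasing in `s ≥ x`, so `s₀ ≤ sinh x` suffices
  have key : 2 * β * sinh x ^ 2 * x ^ 2 ≤ (1 + sinh x ^ 2) * (sinh x ^ 2 - x ^ 2) := by
    have hsq := pow_le_pow_left₀ (by positivity) hs₀S 2
    have hxsq := pow_le_pow_left₀ hx0.le hxs₀ 2
    nlinarith [mul_nonneg (sub_nonneg.2 hsq)
      (by nlinarith : 0 ≤ sinh x ^ 2 + s₀ ^ 2 + 1 - x ^ 2 - 2 * β * x ^ 2)]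
  rw [gapDeriv2, cosh_sq, sub_nonpos, div_add_div _ _ (by positivity) (by positivity),
    div_le_div_iff₀ (by positivity) (by positivity)]
  nlinarith [key]

lemma concaveOn_gap {β : ℝ} (hβ : β ≤ 5 / 27) : ConcaveOn ℝ (Ici (2 / 5)) (gap β) := by
  have hpos : ∀ x ∈ Ici (2 / 5 : ℝ), 0 < x := fun x hx => by linarith [mem_Ici.1 hx]
  refine concaveOn_of_hasDerivWithinAt2_nonpos (convex_Ici _)
    (fun x hx => (hasDerivAt_gap β (hpos x hx)).continuousAt.continuousWithinAt)
    (fun x hx => (hasDerivAt_gap β (hpos x (interior_subset hx))).hasDerivWithinAt)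
    (fun x hx => (hasDerivAt_gapDeriv β (hpos x (interior_subset hx))).hasDerivWithinAt)
    (fun x hx => gapDeriv2_nonpos hβ (interior_subset hx))

theorem gap_pos {β x : ℝ} (hβ : β * log 2 + log (arsinh 1) = 0) (hx0 : 0 < x)
    (hx : x < arsinh 1) : 0 < gap β x := by
  obtain ⟨hβ₁, hβ₂⟩ := exponent_mem_Icc hβ
  rcases le_or_gt x (2 / 5) with hx' | hx'
  · exact gap_pos_of_le_two_fifths hβ₁ hx0 hx'
  have hmem : x ∈ openSegment ℝ (2 / 5) (arsinh 1) := by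
    rw [openSegment_eq_Ioo (hx'.trans hx)]
    exact ⟨hx', hx⟩
  by_contra! hneg
  have := (concaveOn_gap hβ₂).left_le_of_le_right self_mem_Ici (hx'.trans hx).le hmem
    (hneg.trans (gap_arsinh_one hβ).ge)
  linarith [gap_pos_of_le_two_fifths hβ₁ (by norm_num) le_rfl]

lemma sinh_div_self_lt_rpow {β x : ℝ} (hx0 : 0 < x) (h : 0 < gap β x) :
    sinh x / x < (1 + sinh x ^ 2) ^ β := by
  have hs : 0 < sinh x := sinh_pos_iff.2 hx0
  rw [lt_rpow_iff_log_lt (div_pos hs hx0) (by positivity), log_div hs.ne' hx0.ne', add_comm,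
    ← cosh_sq, log_pow]
  unfold gap at h
  push_cast
  linarith

end NeumanSandor

lemma NSmean_comm (a b : ℝ) : NSmean a b = NSmean b a := by
  rw [NSmean, NSmean, ← neg_sub b a, add_comm a, neg_div (b + a) (b - a), arsinh_neg]
  ring

lemma Amean_comm (a b : ℝ) : Amean a b = Amean b a := by
  rw [Amean, Amean, add_comm]

lemma Cmean_comm (a b : ℝ) : Cmean a b = Cmean b a := by
  rw [Cmean, Cmean, add_comm (a ^ 2), add_comm a]

lemma NSmean_eq_Amean_mul {a b : ℝ} (h : a + b ≠ 0) :
    NSmean a b = Amean a b * ((a - b) / (a + b) / arsinh ((a - b) / (a + b))) := by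
  rw [NSmean, Amean]
  field_simp

lemma Cmean_eq_Amean_mul {a b : ℝ} (h : a + b ≠ 0) :
    Cmean a b = Amean a b * (1 + ((a - b) / (a + b)) ^ 2) := by
  rw [Cmean, Amean]
  field_simp
  ring

lemma NSmean_lt_of_lt {a b β : ℝ} (hb : 0 < b) (hba : b < a)
    (hβ : β * log 2 + log (arsinh 1) = 0) :
    NSmean a b < Cmean a b ^ β * Amean a b ^ (1 - β) := by
  have hab : 0 < a + b := by linarith
  have hA : 0 < Amean a b := by rw [Amean]; positivity
  set T := (a - b) / (a + b)
  have hT0 : 0 < T := div_pos (by linarith) hab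
  have hT1 : T < 1 := (div_lt_one hab).2 (by linarith)
  have hx0 : 0 < arsinh T := arsinh_pos_iff.2 hT0
  have key := NeumanSandor.sinh_div_self_lt_rpow hx0
    (NeumanSandor.gap_pos hβ hx0 (arsinh_lt_arsinh.2 hT1))
  rw [sinh_arsinh] at key
  rw [NSmean_eq_Amean_mul hab.ne', Cmean_eq_Amean_mul hab.ne', mul_rpow hA.le (by positivity),
    mul_right_comm, ← rpow_add hA, add_sub_cancel, rpow_one]
  exact mul_lt_mul_of_pos_left key hA

theorem stmt_1 (a b : ℝ) (ha : 0 < a) (hb : 0 < b) (hab : a ≠ b)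
    (β : ℝ) (hβ : β = -Real.log (Real.log (1 + Real.sqrt 2)) / Real.log 2) :
    NSmean a b < Cmean a b ^ β * Amean a b ^ (1 - β) := by
  have hβ' : β * log 2 + log (arsinh 1) = 0 := by
    rw [hβ, arsinh_one_eq_log, div_mul_cancel₀ _ (log_pos one_lt_two).ne']
    ring
  rcases hab.lt_or_gt with h | h
  · rw [NSmean_comm, Cmean_comm, Amean_comm]
    exact NSmean_lt_of_lt ha h hβ'
  · exact NSmean_lt_of_lt hb h hβ'
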